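/- arXiv:1503.06970 — 4 statements merged into one kernel-verified Lean document; each statement's English description precedes it below -/
import Mathlib

section
/- In a plane graph where every inner face f satisfies (|f|−2)π ≥ θ(f) (the angle sum of the face), every inner vertex v satisfies θ(v) ≥ 2π (the angle sum around v), and the b outer-boundary vertices contribute at least (b−2)π in total, double counting of angles yields |V| − |E| + |F| ≤ 2; hence if the graph is planar connected (so Euler's formula gives equality), then θ(v) = 2π for every inner vertex. -/
/-!
Count the total angle `Σ_v Σ_f θ(v,f)` twice. Face by face it is at most
`Σ_f (|f| - 2)π = (2|E| - b - 2(|F| - 1))π`, since the inner face sizes add up to `2|E| - b`.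
Vertex by vertex it is `(b - 2)π + 2π(|V| - b)` plus the total defect `Σ (θ(v) - 2π)` of the
inner vertices. Comparing, the defect is at most `2π(2 - (|V| - |E| + |F|))`; as each defect
is nonnegative, `|V| - |E| + |F| ≤ 2`, and under Euler's formula every defect vanishes.
-/

open Finset Real

section AngleSums

variable {V F : Type*} [Fintype V] [Fintype F] [DecidableEq F]

theorem sum_vertex_angles_eq_sum_inner_face_angles (θ : V → F → ℝ) {outerFace : F}
    (houterFace : ∀ v, θ v outerFace = 0) :
    ∑ v, ∑ f, θ v f = ∑ f ∈ univ.erase outerFace, ∑ v, θ v f := by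
  rw [sum_comm, ← sum_erase_add _ _ (mem_univ outerFace)]
  simp [houterFace]

theorem sum_vertex_angles_le (θ : V → F → ℝ) {outerFace : F} (size : F → ℕ)
    (houterFace : ∀ v, θ v outerFace = 0)
    (hface : ∀ f, f ≠ outerFace → ∑ v, θ v f ≤ ((size f : ℝ) - 2) * π) :
    ∑ v, ∑ f, θ v f ≤
      (∑ f ∈ univ.erase outerFace, (size f : ℝ) - 2 * (Fintype.card F - 1)) * π := by
  rw [sum_vertex_angles_eq_sum_inner_face_angles θ houterFace]
  calc ∑ f ∈ univ.erase outerFace, ∑ v, θ v f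
      ≤ ∑ f ∈ univ.erase outerFace, ((size f : ℝ) - 2) * π :=
        sum_le_sum fun f hf => hface f (ne_of_mem_erase hf)
    _ = _ := by
        rw [← sum_mul, sum_sub_distrib, sum_const, card_erase_of_mem (mem_univ _), card_univ,
          nsmul_eq_mul, Nat.cast_pred (Fintype.card_pos_iff.2 ⟨outerFace⟩)]
        ring

theorem sum_inner_angle_defect_le [DecidableEq V] (θ : V → F → ℝ) {outerFace : F}
    {outerV : Finset V} (size : F → ℕ) (nE : ℕ)
    (houterFace : ∀ v, θ v outerFace = 0)
    (houterV : ((#outerV : ℝ) - 2) * π ≤ ∑ v ∈ outerV, ∑ f, θ v f)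
    (hface : ∀ f, f ≠ outerFace → ∑ v, θ v f ≤ ((size f : ℝ) - 2) * π)
    (hsize : ∑ f ∈ univ.erase outerFace, (size f : ℝ) = 2 * nE - #outerV) :
    ∑ v ∈ outerVᶜ, (∑ f, θ v f - 2 * π) ≤
      2 * π * (2 - ((Fintype.card V : ℝ) - nE + Fintype.card F)) := by
  have htotal := sum_vertex_angles_le θ size houterFace hface
  rw [hsize, ← sum_add_sum_compl outerV] at htotal
  have hcard : (#outerVᶜ : ℝ) = Fintype.card V - #outerV := by
    rw [card_compl, Nat.cast_sub (card_le_univ outerV)]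
  rw [sum_sub_distrib, sum_const, nsmul_eq_mul, hcard]
  linarith

end AngleSums

theorem angle_double_counting_general
    {V F : Type*} [Fintype V] [Fintype F] [DecidableEq V] [DecidableEq F]
    (θ : V → F → ℝ)
    (outerFace : F) (outerV : Finset V) (b : ℕ) (hb : outerV.card = b)
    (size : F → ℕ) (nE : ℕ) (hbE : b ≤ 2 * nE)
    -- no angles are counted in the outer face
    (houterFace : ∀ v, θ v outerFace = 0)
    -- angle sum around each inner vertex is at least 2π
    (hinnerV : ∀ v ∉ outerV, 2 * Real.pi ≤ ∑ f, θ v f)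
    -- the outer vertices contribute at least (b-2)π in total
    (houterV : ((b : ℝ) - 2) * Real.pi ≤ ∑ v ∈ outerV, ∑ f, θ v f)
    -- angle sum of each inner face f is at most (|f|-2)π
    (hface : ∀ f, f ≠ outerFace → ∑ v, θ v f ≤ ((size f : ℝ) - 2) * Real.pi)
    -- each of the nE edges is incident to two faces; b of these incidences are
    -- with the outer face
    (hsize : ∑ f ∈ Finset.univ.filter (fun f => f ≠ outerFace), size f = 2 * nE - b) :
    ((Fintype.card V : ℤ) - nE + Fintype.card F ≤ 2) ∧
    ((Fintype.card V : ℤ) - nE + Fintype.card F = 2 →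
      ∀ v ∉ outerV, ∑ f, θ v f = 2 * Real.pi) := by
  subst hb
  have hsize' : ∑ f ∈ univ.erase outerFace, (size f : ℝ) = 2 * nE - #outerV := by
    rw [← filter_ne', ← Nat.cast_sum, hsize, Nat.cast_sub hbE]
    push_cast
    ring
  have hdefect := sum_inner_angle_defect_le θ size nE houterFace houterV hface hsize'
  have hnonneg : ∀ v ∈ outerVᶜ, 0 ≤ ∑ f, θ v f - 2 * π := fun v hv =>
    sub_nonneg.2 (hinnerV v (mem_compl.1 hv))
  have hχ : (Fintype.card V : ℝ) - nE + Fintype.card F ≤ 2 := by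
    nlinarith [sum_nonneg hnonneg, pi_pos]
  refine ⟨by exact_mod_cast hχ, fun hEuler v hv => ?_⟩
  have hEuler' : (Fintype.card V : ℝ) - nE + Fintype.card F = 2 := by exact_mod_cast hEuler
  rw [hEuler', sub_self, mul_zero] at hdefect
  have hzero := le_antisymm hdefect (sum_nonneg hnonneg)
  exact sub_eq_zero.1 ((sum_eq_zero_iff_of_nonneg hnonneg).1 hzero v (mem_compl.2 hv))

/-- Double counting of angles in a plane graph: if every inner face `f` has angle sum
`θ(f) ≤ (|f|-2)π`, every inner vertex has angle sum `θ(v) ≥ 2π`, and the `b` outer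
vertices contribute at least `(b-2)π`, then `|V| - |E| + |F| ≤ 2`; if moreover Euler's
formula holds (equality), then `θ(v) = 2π` at every inner vertex. -/
theorem angle_double_counting
    {V F : Type*} [Fintype V] [Fintype F] [DecidableEq V] [DecidableEq F]
    (θ : V → F → ℝ) (hθnonneg : ∀ v f, 0 ≤ θ v f)
    (outerFace : F) (outerV : Finset V) (b : ℕ) (hb : outerV.card = b) (hb2 : 2 ≤ b)
    (size : F → ℕ) (nE : ℕ) (hbE : b ≤ 2 * nE)
    -- no angles are counted in the outer face
    (houterFace : ∀ v, θ v outerFace = 0)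
    -- angle sum around each inner vertex is at least 2π
    (hinnerV : ∀ v ∉ outerV, 2 * Real.pi ≤ ∑ f, θ v f)
    -- the outer vertices contribute at least (b-2)π in total
    (houterV : ((b : ℝ) - 2) * Real.pi ≤ ∑ v ∈ outerV, ∑ f, θ v f)
    -- angle sum of each inner face f is at most (|f|-2)π
    (hface : ∀ f, f ≠ outerFace → ∑ v, θ v f ≤ ((size f : ℝ) - 2) * Real.pi)
    -- each of the nE edges is incident to two faces; b of these incidences are
    -- with the outer face
    (hsize : ∑ f ∈ Finset.univ.filter (fun f => f ≠ outerFace), size f = 2 * nE - b) :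
    ((Fintype.card V : ℤ) - nE + Fintype.card F ≤ 2) ∧
    ((Fintype.card V : ℤ) - nE + Fintype.card F = 2 →
      ∀ v ∉ outerV, ∑ f, θ v f = 2 * Real.pi) :=
  angle_double_counting_general θ outerFace outerV b hb size nE hbE houterFace hinnerV houterV hface
    hsize
end

section
/- Let Σ be a finite contact system of straight line segments in the plane (any two segments meet in at most one point, which is an endpoint of at least one of them). Then every subset S ⊆ Σ with |S| ≥ 2 has at least three extremal points. -/
open scoped Classical

abbrev Pt := ℝ × ℝ

/-- The set covered by a segment with endpoints `s.1`, `s.2`. -/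
def segSet (s : Pt × Pt) : Set Pt := segment ℝ s.1 s.2

/-- A finite contact system of straight line segments: all segments are
non-degenerate and any two distinct segments meet in at most one point,
which is an endpoint of at least one of them. -/
def IsContactSystem (Sig : Finset (Pt × Pt)) : Prop :=
  (∀ s ∈ Sig, s.1 ≠ s.2) ∧
  ∀ s ∈ Sig, ∀ t ∈ Sig, s ≠ t →
    Set.Subsingleton (segSet s ∩ segSet t) ∧
    ∀ p ∈ segSet s ∩ segSet t,
      p = s.1 ∨ p = s.2 ∨ p = t.1 ∨ p = t.2

/-- The unbounded region of the complement of a set `U`. -/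
def unboundedRegion (U : Set Pt) : Set Pt :=
  {x | x ∉ U ∧ ¬ Bornology.IsBounded (connectedComponentIn Uᶜ x)}

/-- `p` is an extremal point for the set `S` of segments:
(E1) an endpoint of a segment of `S`, (E2) not interior to any segment of `S`,
(E3) incident to the unbounded region of `S`. -/
def ExtremalPoint (S : Finset (Pt × Pt)) (p : Pt) : Prop :=
  (∃ s ∈ S, p = s.1 ∨ p = s.2) ∧
  (∀ s ∈ S, p ∉ openSegment ℝ s.1 s.2) ∧
  p ∈ closure (unboundedRegion (⋃ s ∈ S, segSet s))

/-!
Let `K` be the convex hull of the endpoints of `S`. From a point outside `K`, the ray pointing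
away from `K` is unbounded and avoids `K`, so every point off the interior of `K` is incident to
the unbounded region. If the endpoints are not collinear, `K` is the convex hull of its extreme
points, so it has at least three of them; each is an endpoint, lies in no open segment between
points of `K`, and is off the interior. If the endpoints are collinear, `K` has empty interior
and every endpoint is extremal: an endpoint inside another segment of the same line would make
the two segments overlap in more than one point. Finally, two distinct segments meeting in at most
one point have at least three endpoints between them.
-/

open Set Filter Topology AffineMap

theorem notMem_openSegment_of_mem_extremePoints {𝕜 E : Type*} [Semiring 𝕜] [PartialOrder 𝕜]
    [AddCommMonoid E] [SMul 𝕜 E] {A : Set E} {p x y : E} (hp : p ∈ A.extremePoints 𝕜)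
    (hx : x ∈ A) (hy : y ∈ A) (hxy : x ≠ y) : p ∉ openSegment 𝕜 x y := fun h =>
  let ⟨h₁, h₂⟩ := (mem_extremePoints.1 hp).2 x hx y hy h
  hxy (h₁.trans h₂.symm)

section Module

variable {E : Type*} [AddCommGroup E] [Module ℝ E]

theorem notMem_openSegment_of_subsingleton_segment_inter {x y p q : E}
    (hq : q ∈ line[ℝ, x, y]) (hpq : p ≠ q)
    (h : (segment ℝ p q ∩ segment ℝ x y).Subsingleton) : p ∉ openSegment ℝ x y := by
  rw [openSegment_eq_image_lineMap]
  rintro ⟨τ, hτ, rfl⟩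
  obtain ⟨σ, rfl⟩ := mem_affineSpan_pair_iff_exists_lineMap_eq.1 hq
  -- points of `[p, q]` close enough to `p` stay in `[x, y]`
  have hnear : ∀ᶠ ε in 𝓝[>] (0 : ℝ), (lineMap τ σ : ℝ →ᵃ[ℝ] ℝ) ε ∈ Icc (0 : ℝ) 1 :=
    ((lineMap_continuous.tendsto' 0 τ (lineMap_apply_zero _ _)).eventually
      (Icc_mem_nhds hτ.1 hτ.2)).filter_mono nhdsWithin_le_nhds
  obtain ⟨ε, hε, hε0, hε1⟩ := (hnear.and (Ioc_mem_nhdsGT one_pos)).exists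
  have hz : lineMap x y (lineMap τ σ ε) ∈
      segment ℝ (lineMap x y τ) (lineMap x y σ) ∩ segment ℝ x y := by
    rw [segment_eq_image_lineMap, segment_eq_image_lineMap]
    exact ⟨⟨ε, Ioc_subset_Icc_self ⟨hε0, hε1⟩, (apply_lineMap _ _ _ _).symm⟩, mem_image_of_mem _ hε⟩
  have hp : lineMap x y τ ∈ segment ℝ x y := by
    rw [segment_eq_image_lineMap]
    exact mem_image_of_mem _ (Ioo_subset_Icc_self hτ)
  have := h hz ⟨left_mem_segment ℝ _ _, hp⟩
  rw [apply_lineMap, lineMap_eq_left_iff] at this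
  exact this.elim hpq (ne_of_gt hε0)

theorem Convex.add_smul_sub_notMem {K : Set E} (hK : Convex ℝ K) {c x : E} (hc : c ∈ K)
    (hx : x ∉ K) {t : ℝ} (ht : 0 ≤ t) : x + t • (x - c) ∉ K := by
  intro hy
  apply hx
  have hmem := hK.add_smul_sub_mem hy hc (t := t / (1 + t))
    ⟨by positivity, div_le_one_of_le₀ (by linarith) (by positivity)⟩
  convert hmem using 1
  have : (t / (1 + t)) * (1 + t) = t := div_mul_cancel₀ _ (by positivity)
  linear_combination (norm := module) this • (x - c)

theorem collinear_convexHull_iff {s : Set E} : Collinear ℝ (convexHull ℝ s) ↔ Collinear ℝ s := by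
  rw [Collinear, Collinear, ← direction_affineSpan, affineSpan_convexHull, direction_affineSpan]

theorem Collinear.of_ncard_le_two {s : Set E} (hs : s.Finite) (h : s.ncard ≤ 2) :
    Collinear ℝ s := by
  interval_cases hn : s.ncard
  · rw [Set.ncard_eq_zero hs] at hn
    exact hn ▸ collinear_empty ℝ E
  · obtain ⟨a, rfl⟩ := Set.ncard_eq_one.1 hn
    exact collinear_singleton ℝ a
  · obtain ⟨a, b, -, rfl⟩ := Set.ncard_eq_two.1 hn
    exact collinear_pair ℝ a b

end Module

section Normed

variable {E : Type*} [NormedAddCommGroup E] [NormedSpace ℝ E]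

theorem not_isBounded_ray (x : E) {v : E} (hv : v ≠ 0) :
    ¬ Bornology.IsBounded ((fun t : ℝ => x + t • v) '' Ici 0) := by
  intro hb
  obtain ⟨C, hC⟩ := (Metric.isBounded_iff_subset_closedBall x).1 hb
  have hv' : 0 < ‖v‖ := norm_pos_iff.2 hv
  have hC0 : 0 ≤ C := by
    simpa using hC ⟨0, mem_Ici.2 le_rfl, rfl⟩
  have := hC ⟨(C + 1) / ‖v‖, mem_Ici.2 (by positivity), rfl⟩
  rw [Metric.mem_closedBall, dist_eq_norm, add_sub_cancel_left, norm_smul,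
    Real.norm_of_nonneg (by positivity), div_mul_cancel₀ _ hv'.ne'] at this
  linarith

theorem three_le_ncard_extremePoints_convexHull {s : Set E} (hs : s.Finite)
    (hcol : ¬ Collinear ℝ s) : 3 ≤ ((convexHull ℝ s).extremePoints ℝ).ncard := by
  have hfin : ((convexHull ℝ s).extremePoints ℝ).Finite := hs.subset extremePoints_convexHull_subset
  have hKM : convexHull ℝ ((convexHull ℝ s).extremePoints ℝ) = convexHull ℝ s := by
    rw [← (hfin.isCompact_convexHull (𝕜 := ℝ)).isClosed.closure_eq]
    exact closure_convexHull_extremePoints (hs.isCompact_convexHull (𝕜 := ℝ))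
      (convex_convexHull ℝ s)
  by_contra! h
  apply hcol
  rw [← collinear_convexHull_iff, ← hKM, collinear_convexHull_iff]
  exact .of_ncard_le_two hfin (by omega)

theorem Collinear.interior_convexHull_eq_empty [FiniteDimensional ℝ E]
    (hE : 2 ≤ Module.finrank ℝ E) {s : Set E} (hs : Collinear ℝ s) :
    interior (convexHull ℝ s) = ∅ := by
  rw [← Set.not_nonempty_iff_eq_empty, interior_convexHull_nonempty_iff_affineSpan_eq_top]
  intro h
  have := collinear_iff_finrank_le_one.1 hs
  rw [← direction_affineSpan, h, AffineSubspace.direction_top, finrank_top] at this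
  omega

end Normed

theorem compl_subset_unboundedRegion {U K : Set Pt} (hK : Convex ℝ K) (hKne : K.Nonempty)
    (hUK : U ⊆ K) : Kᶜ ⊆ unboundedRegion U := by
  obtain ⟨c, hc⟩ := hKne
  intro x hx
  have hray : (fun t : ℝ => x + t • (x - c)) '' Ici 0 ⊆ connectedComponentIn Uᶜ x := by
    refine (isPreconnected_Ici.image _ (by fun_prop)).subset_connectedComponentIn
      ⟨0, mem_Ici.2 le_rfl, by simp⟩ ?_
    rintro _ ⟨t, ht, rfl⟩ hU
    exact hK.add_smul_sub_notMem hc hx ht (hUK hU)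
  exact ⟨fun hxU => hx (hUK hxU), fun hb =>
    not_isBounded_ray x (sub_ne_zero.2 (ne_of_mem_of_not_mem hc hx).symm) (hb.subset hray)⟩

theorem mem_closure_unboundedRegion {U K : Set Pt} (hK : Convex ℝ K) (hKne : K.Nonempty)
    (hUK : U ⊆ K) {p : Pt} (hp : p ∉ interior K) : p ∈ closure (unboundedRegion U) :=
  closure_mono (compl_subset_unboundedRegion hK hKne hUK) (by rwa [closure_compl])

def endpoints {α : Type*} [DecidableEq α] (S : Finset (α × α)) : Finset α :=
  S.biUnion fun s => {s.1, s.2}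

theorem mem_endpoints {α : Type*} [DecidableEq α] {S : Finset (α × α)} {p : α} :
    p ∈ endpoints S ↔ ∃ s ∈ S, p = s.1 ∨ p = s.2 := by
  simp [endpoints]

theorem segSet_subset_convexHull_endpoints {S : Finset (Pt × Pt)} {s : Pt × Pt} (hs : s ∈ S) :
    segSet s ⊆ convexHull ℝ (endpoints S : Set Pt) :=
  (convex_convexHull ℝ _).segment_subset
    (subset_convexHull ℝ _ (mem_endpoints.2 ⟨s, hs, .inl rfl⟩))
    (subset_convexHull ℝ _ (mem_endpoints.2 ⟨s, hs, .inr rfl⟩))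

theorem three_le_card_endpoints {S : Finset (Pt × Pt)} (hnd : ∀ s ∈ S, s.1 ≠ s.2)
    (hmeet : ∀ s ∈ S, ∀ t ∈ S, s ≠ t → (segSet s ∩ segSet t).Subsingleton)
    (hcard : 2 ≤ S.card) : 3 ≤ (endpoints S).card := by
  obtain ⟨s, hs, t, ht, hst⟩ := Finset.one_lt_card.1 hcard
  obtain ⟨e, he, hes₁, hes₂⟩ : ∃ e, (e = t.1 ∨ e = t.2) ∧ e ≠ s.1 ∧ e ≠ s.2 := by
    by_contra! h
    have hmem : ∀ e, (e = t.1 ∨ e = t.2) → e ∈ segSet s ∩ segSet t := by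
      intro e he
      constructor
      · by_cases he₁ : e = s.1
        · exact he₁ ▸ left_mem_segment ℝ _ _
        · exact h e he he₁ ▸ right_mem_segment ℝ _ _
      · rcases he with rfl | rfl
        exacts [left_mem_segment ℝ _ _, right_mem_segment ℝ _ _]
    exact hnd t ht (hmeet s hs t ht hst (hmem _ (.inl rfl)) (hmem _ (.inr rfl)))
  calc 3 = ({s.1, s.2, e} : Finset Pt).card :=
        (Finset.card_eq_three.2 ⟨_, _, _, hnd s hs, hes₁.symm, hes₂.symm, rfl⟩).symm
    _ ≤ (endpoints S).card := by
      refine Finset.card_le_card fun p hp => mem_endpoints.2 ?_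
      simp only [Finset.mem_insert, Finset.mem_singleton] at hp
      rcases hp with rfl | rfl | rfl
      exacts [⟨s, hs, .inl rfl⟩, ⟨s, hs, .inr rfl⟩, ⟨t, ht, he⟩]

theorem endpoint_notMem_openSegment_of_collinear {S : Finset (Pt × Pt)}
    (hnd : ∀ s ∈ S, s.1 ≠ s.2)
    (hmeet : ∀ s ∈ S, ∀ t ∈ S, s ≠ t → (segSet s ∩ segSet t).Subsingleton)
    (hcol : Collinear ℝ (endpoints S : Set Pt)) {p : Pt} {t : Pt × Pt}
    (hp : p ∈ endpoints S) (ht : t ∈ S) : p ∉ openSegment ℝ t.1 t.2 := by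
  obtain ⟨s, hs, hps⟩ := mem_endpoints.1 hp
  by_cases hst : s = t
  · subst hst
    rcases hps with rfl | rfl
    · exact fun h => hnd s hs (left_mem_openSegment_iff.1 h)
    · exact fun h => hnd s hs (right_mem_openSegment_iff.1 h)
  obtain ⟨q, hq, hpq, hseg⟩ : ∃ q ∈ endpoints S, p ≠ q ∧ segment ℝ p q = segSet s := by
    rcases hps with rfl | rfl
    · exact ⟨s.2, mem_endpoints.2 ⟨s, hs, .inr rfl⟩, hnd s hs, rfl⟩
    · exact ⟨s.1, mem_endpoints.2 ⟨s, hs, .inl rfl⟩, (hnd s hs).symm, segment_symm ℝ _ _⟩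
  refine notMem_openSegment_of_subsingleton_segment_inter ?_ hpq ?_
  · exact hcol.mem_affineSpan_of_mem_of_ne (mem_endpoints.2 ⟨t, ht, .inl rfl⟩)
      (mem_endpoints.2 ⟨t, ht, .inr rfl⟩) hq (hnd t ht)
  · exact hseg ▸ hmeet s hs t ht hst

theorem extremalPoint_of_mem_endpoints {S : Finset (Pt × Pt)} {p : Pt} (hp : p ∈ endpoints S)
    (hE2 : ∀ s ∈ S, p ∉ openSegment ℝ s.1 s.2)
    (hint : p ∉ interior (convexHull ℝ (endpoints S : Set Pt))) : ExtremalPoint S p := by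
  have hU : (⋃ s ∈ S, segSet s) ⊆ convexHull ℝ (endpoints S : Set Pt) :=
    iUnion₂_subset fun _ hs => segSet_subset_convexHull_endpoints hs
  exact ⟨mem_endpoints.1 hp, hE2,
    mem_closure_unboundedRegion (convex_convexHull ℝ _) ⟨p, subset_convexHull ℝ _ hp⟩ hU hint⟩

theorem finite_setOf_extremalPoint (S : Finset (Pt × Pt)) : {p | ExtremalPoint S p}.Finite :=
  (endpoints S).finite_toSet.subset fun _ hp => mem_endpoints.2 hp.1

theorem endpoints_subset_extremalPoint_of_collinear {S : Finset (Pt × Pt)}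
    (hnd : ∀ s ∈ S, s.1 ≠ s.2)
    (hmeet : ∀ s ∈ S, ∀ t ∈ S, s ≠ t → (segSet s ∩ segSet t).Subsingleton)
    (hcol : Collinear ℝ (endpoints S : Set Pt)) :
    (endpoints S : Set Pt) ⊆ {p | ExtremalPoint S p} := fun _ hp =>
  extremalPoint_of_mem_endpoints hp
    (fun _ ht => endpoint_notMem_openSegment_of_collinear hnd hmeet hcol hp ht)
    (by simp [hcol.interior_convexHull_eq_empty (by simp)])

theorem extremePoints_convexHull_endpoints_subset_extremalPoint {S : Finset (Pt × Pt)}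
    (hnd : ∀ s ∈ S, s.1 ≠ s.2) :
    (convexHull ℝ (endpoints S : Set Pt)).extremePoints ℝ ⊆ {p | ExtremalPoint S p} :=
  fun _ hp => extremalPoint_of_mem_endpoints (extremePoints_convexHull_subset hp)
    (fun s hs => notMem_openSegment_of_mem_extremePoints hp
      (subset_convexHull ℝ _ (mem_endpoints.2 ⟨s, hs, .inl rfl⟩))
      (subset_convexHull ℝ _ (mem_endpoints.2 ⟨s, hs, .inr rfl⟩)) (hnd s hs))
    ((disjoint_interior_extremePoints _).notMem_of_mem_right hp)

/-- Every subset `S` with `|S| ≥ 2` of a finite contact system of straight line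
segments has at least three extremal points. -/
theorem contact_system_three_extremal_points
    (Sig : Finset (Pt × Pt)) (hSig : IsContactSystem Sig)
    (S : Finset (Pt × Pt)) (hS : S ⊆ Sig) (hcard : 2 ≤ S.card) :
    3 ≤ {p | ExtremalPoint S p}.ncard := by
  have hnd : ∀ s ∈ S, s.1 ≠ s.2 := fun s hs => hSig.1 s (hS hs)
  have hmeet : ∀ s ∈ S, ∀ t ∈ S, s ≠ t → (segSet s ∩ segSet t).Subsingleton :=
    fun s hs t ht hst => (hSig.2 s (hS hs) t (hS ht) hst).1
  by_cases hcol : Collinear ℝ (endpoints S : Set Pt)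
  · calc 3 ≤ (endpoints S).card := three_le_card_endpoints hnd hmeet hcard
      _ = (endpoints S : Set Pt).ncard := (ncard_coe_finset _).symm
      _ ≤ _ := ncard_le_ncard (endpoints_subset_extremalPoint_of_collinear hnd hmeet hcol)
          (finite_setOf_extremalPoint S)
  · exact (three_le_ncard_extremePoints_convexHull (endpoints S).finite_toSet hcol).trans
      (ncard_le_ncard (extremePoints_convexHull_endpoints_subset_extremalPoint hnd)
        (finite_setOf_extremalPoint S))
end

section
/- Let S be a finite set of at least two line segments all contained in a common line ℓ, forming a contact system (any two meet in at most one point, an endpoint of one of them), whose union is connected. Then there exists a point of ℓ that is an endpoint of at least two segments of S and is not an interior point of any segment of S. -/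
section LinearOrderedField

variable {𝕜 : Type*} [Field 𝕜] [LinearOrder 𝕜] [IsStrictOrderedRing 𝕜]

theorem not_subsingleton_segment_inter_of_mem_openSegment {a b c d x : 𝕜} (hab : a ≠ b)
    (hcd : c ≠ d) (hx : x ∈ openSegment 𝕜 a b) (hx' : x ∈ segment 𝕜 c d) :
    ¬(segment 𝕜 a b ∩ segment 𝕜 c d).Subsingleton := by
  rw [openSegment_eq_Ioo' hab] at hx
  rw [segment_eq_Icc'] at hx'
  rw [segment_eq_Icc', segment_eq_Icc', Set.Icc_inter_Icc]
  have hlt : max (min a b) (min c d) < min (max a b) (max c d) :=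
    max_lt (lt_min (min_lt_max.2 hab) (hx.1.trans_le hx'.2))
      (lt_min (hx'.1.trans_lt hx.2) (min_lt_max.2 hcd))
  exact fun h => hlt.ne (h (Set.left_mem_Icc.2 hlt.le) (Set.right_mem_Icc.2 hlt.le))

variable {E : Type*} [AddCommGroup E] [Module 𝕜 E]

theorem Collinear.not_subsingleton_segment_inter_of_mem_openSegment {a b c d x : E}
    (hcol : Collinear 𝕜 {a, b, c, d}) (hab : a ≠ b) (hcd : c ≠ d)
    (hx : x ∈ openSegment 𝕜 a b) (hx' : x ∈ segment 𝕜 c d) :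
    ¬(segment 𝕜 a b ∩ segment 𝕜 c d).Subsingleton := by
  obtain ⟨p₀, v, hv⟩ := (collinear_iff_exists_forall_eq_smul_vadd _).1 hcol
  have hv0 : v ≠ 0 := by
    rintro rfl
    obtain ⟨_, rfl⟩ := hv c (by simp)
    obtain ⟨_, rfl⟩ := hv d (by simp)
    simp at hcd
  set f : 𝕜 →ᵃ[𝕜] E := AffineMap.lineMap p₀ (v +ᵥ p₀)
  have hf : Function.Injective f := AffineMap.lineMap_injective 𝕜 (by simpa using hv0)
  have hf_range : ∀ y ∈ ({a, b, c, d} : Set E), ∃ r, f r = y := fun y hy => by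
    obtain ⟨r, rfl⟩ := hv y hy
    exact ⟨r, by simp [f, AffineMap.lineMap_apply]⟩
  obtain ⟨ra, rfl⟩ := hf_range a (by simp)
  obtain ⟨rb, rfl⟩ := hf_range b (by simp)
  obtain ⟨rc, rfl⟩ := hf_range c (by simp)
  obtain ⟨rd, rfl⟩ := hf_range d (by simp)
  rw [← image_openSegment] at hx
  obtain ⟨rx, hrx, rfl⟩ := hx
  rw [← image_segment, hf.mem_set_image] at hx'
  rw [← image_segment, ← image_segment, ← Set.image_inter hf, hf.subsingleton_image_iff]
  exact _root_.not_subsingleton_segment_inter_of_mem_openSegment (hf.ne_iff.1 hab)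
    (hf.ne_iff.1 hcd) hrx hx'

end LinearOrderedField

theorem eq_or_eq_of_mem_segment_of_notMem_openSegment {𝕜 E : Type*} [Semiring 𝕜] [PartialOrder 𝕜]
    [ZeroLEOneClass 𝕜] [AddCommMonoid E] [Module 𝕜 E] {x y z : E} (hz : z ∈ segment 𝕜 x y)
    (hz' : z ∉ openSegment 𝕜 x y) : z = x ∨ z = y := by
  rw [← insert_endpoints_openSegment] at hz
  simpa [hz'] using hz

theorem isCompact_segment {E : Type*} [AddCommGroup E] [Module ℝ E] [TopologicalSpace E]
    [IsTopologicalAddGroup E] [ContinuousSMul ℝ E] (x y : E) : IsCompact (segment ℝ x y) :=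
  convexHull_pair (𝕜 := ℝ) x y ▸ (Set.toFinite _).isCompact_convexHull ℝ

theorem exists_ne_inter_nonempty_of_isPreconnected_biUnion {ι X : Type*} [TopologicalSpace X]
    {S : Finset ι} {F : ι → Set X} (hS : 1 < S.card) (hclosed : ∀ i ∈ S, IsClosed (F i))
    (hne : ∀ i ∈ S, (F i).Nonempty) (hconn : IsPreconnected (⋃ i ∈ S, F i)) :
    ∃ i ∈ S, ∃ j ∈ S, i ≠ j ∧ (F i ∩ F j).Nonempty := by
  classical
  by_contra! hdisj
  obtain ⟨i, hi, j, hj, hij⟩ := Finset.one_lt_card.1 hS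
  set B := ⋃ k ∈ S.erase i, F k
  have hiB : Disjoint (F i) B := Set.disjoint_iUnion₂_right.2 fun k hk =>
    Set.disjoint_iff_inter_eq_empty.2
      (hdisj i hi k (Finset.mem_of_mem_erase hk) (Finset.ne_of_mem_erase hk).symm)
  have hcover : ⋃ k ∈ S, F k ⊆ F i ∪ B := Set.iUnion₂_subset fun k hk => by
    rcases eq_or_ne k i with rfl | hki
    · exact Set.subset_union_left
    · exact (Set.subset_biUnion_of_mem (Finset.mem_erase.2 ⟨hki, hk⟩)).trans
        Set.subset_union_right
  rcases isPreconnected_iff_subset_of_disjoint_closed.1 hconn (F i) B (hclosed i hi)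
    ((S.erase i).finite_toSet.isClosed_biUnion fun k hk => hclosed k (Finset.mem_of_mem_erase hk))
    hcover (by rw [hiB.inter_eq, Set.inter_empty]) with h | h
  · obtain ⟨y, hy⟩ := hne j hj
    have hyi : y ∈ F i := h (Set.mem_biUnion hj hy)
    exact (hdisj i hi j hj hij).subset ⟨hyi, hy⟩
  · obtain ⟨y, hy⟩ := hne i hi
    exact hiB.ne_of_mem hy (h (Set.mem_biUnion hi hy)) rfl

/-- Collinear case: a finite contact system of at least two segments, all lying on a
common line, with connected union, has a point that is an endpoint of at least two
segments and interior to none. -/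
theorem collinear_contact_system_common_endpoint
    (S : Finset (Pt × Pt)) (hcard : 2 ≤ S.card)
    (hnd : ∀ s ∈ S, s.1 ≠ s.2)
    -- all segments lie on a common line ℓ
    (hline : Collinear ℝ (⋃ s ∈ S, segSet s))
    -- contact system: two distinct segments meet in at most one point, an endpoint
    (hcontact : ∀ s ∈ S, ∀ t ∈ S, s ≠ t →
      Set.Subsingleton (segSet s ∩ segSet t) ∧
      ∀ p ∈ segSet s ∩ segSet t, p = s.1 ∨ p = s.2 ∨ p = t.1 ∨ p = t.2)
    -- the union of the segments is connected
    (hconn : IsConnected (⋃ s ∈ S, segSet s)) :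
    ∃ p : Pt,
      (∃ s ∈ S, ∃ t ∈ S, s ≠ t ∧ (p = s.1 ∨ p = s.2) ∧ (p = t.1 ∨ p = t.2)) ∧
      ∀ s ∈ S, p ∉ openSegment ℝ s.1 s.2 := by
  obtain ⟨s, hs, t, ht, hst, p, hps, hpt⟩ :=
    exists_ne_inter_nonempty_of_isPreconnected_biUnion (F := segSet) hcard
      (fun u _ => (isCompact_segment u.1 u.2).isClosed)
      (fun u _ => ⟨u.1, left_mem_segment ℝ u.1 u.2⟩) hconn.isPreconnected
  have hends : ∀ u ∈ S, ∀ w ∈ S, ({u.1, u.2, w.1, w.2} : Set Pt) ⊆ ⋃ s ∈ S, segSet s := by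
    intro u hu w hw
    simp only [Set.insert_subset_iff, Set.singleton_subset_iff]
    exact ⟨Set.mem_biUnion hu (left_mem_segment ℝ _ _),
      Set.mem_biUnion hu (right_mem_segment ℝ _ _),
      Set.mem_biUnion hw (left_mem_segment ℝ _ _),
      Set.mem_biUnion hw (right_mem_segment ℝ _ _)⟩
  have not_interior : ∀ u ∈ S, ∀ w ∈ S, u ≠ w → p ∈ segSet w → p ∉ openSegment ℝ u.1 u.2 :=
    fun u hu w hw huw hpw hpu =>
      (hline.subset (hends u hu w hw)).not_subsingleton_segment_inter_of_mem_openSegment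
        (hnd u hu) (hnd w hw) hpu hpw (hcontact u hu w hw huw).1
  refine ⟨p, ⟨s, hs, t, ht, hst, eq_or_eq_of_mem_segment_of_notMem_openSegment hps
    (not_interior s hs t ht hst hpt), eq_or_eq_of_mem_segment_of_notMem_openSegment hpt
    (not_interior t ht s hs hst.symm hps)⟩, fun u hu hpu => ?_⟩
  rcases eq_or_ne u s with rfl | hus
  · exact not_interior u hu t ht hst hpt hpu
  · exact not_interior u hu s hs hus hps hpu
end

section
/- Let v be a point in the plane with finitely many neighbors, at least three of which, say x, y, z, are positioned so that every closed half-plane whose boundary passes through v contains at least one of x, y, z. Then the sum of consecutive angles at v, traversing the neighbors in the cyclic order x, then y, then z, then back to x, is at least 2π. -/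
open EuclideanGeometry

abbrev E2 := EuclideanSpace ℝ (Fin 2)

/-- The sum of the angles at `v` between consecutive neighbors of the cyclic
sequence `l`. -/
noncomputable def angleSum (v : E2) (l : List E2) : ℝ :=
  ((l.zip (l.rotate 1)).map (fun p => ∠ p.1 v p.2)).sum

/-!
Write `a, b, c` for the directions from `v` to `x, y, z`. By Hahn–Banach, the half-plane
hypothesis says that `0` lies in the convex hull of `a, b, c`, so one of them, say `-a`, lies in
the cone spanned by the other two. The angle from `b` to `c` then passes through `-a`, giving
`∠(b, c) = (π - ∠(a, b)) + (π - ∠(c, a))`: the three angles add up to exactly `2π`. Finally, by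
the triangle inequality for angles, deleting entries of a cyclic sequence can only decrease its
angle sum, and some ordering of `x, y, z` is a subsequence of the neighbours of `v`.
-/

section CyclicSum

variable {α : Type*} (d : α → α → ℝ)

noncomputable def cyclicSum (l : List α) : ℝ :=
  ((l.zip (l.rotate 1)).map fun p => d p.1 p.2).sum

noncomputable def pathSum : α → List α → ℝ
  | _, [] => 0
  | a, b :: t => d a b + pathSum b t

theorem cyclicSum_rotate (l : List α) (n : ℕ) : cyclicSum d (l.rotate n) = cyclicSum d l := by
  rw [cyclicSum, List.rotate_rotate, Nat.add_comm, ← List.rotate_rotate, List.zip,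
    ← List.zipWith_rotate_distrib _ _ _ _ (List.length_rotate _ _).symm, List.map_rotate]
  exact (List.rotate_perm _ n).sum_eq

theorem sum_map_zip_cons_append_singleton (a b : α) (t : List α) :
    (((a :: t).zip (t ++ [b])).map fun p => d p.1 p.2).sum = pathSum d a (t ++ [b]) := by
  induction t generalizing a with
  | nil => simp [pathSum]
  | cons c t ih => simp [pathSum, ← ih]

theorem cyclicSum_cons (a : α) (t : List α) : cyclicSum d (a :: t) = pathSum d a (t ++ [a]) := by
  rw [cyclicSum, List.rotate_cons_succ, List.rotate_zero, sum_map_zip_cons_append_singleton]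

variable {d} (htri : ∀ a b c, d a c ≤ d a b + d b c)
include htri

theorem pathSum_le_add_pathSum (a c b : α) (l : List α) :
    pathSum d a (l ++ [b]) ≤ d a c + pathSum d c (l ++ [b]) := by
  cases l with
  | nil => simpa [pathSum] using htri a c b
  | cons e l => simp only [List.cons_append, pathSum]; linarith [htri a c e]

theorem pathSum_le_of_sublist {l₁ l₂ : List α} (h : l₁.Sublist l₂) (a b : α) :
    pathSum d a (l₁ ++ [b]) ≤ pathSum d a (l₂ ++ [b]) := by
  induction h generalizing a with
  | slnil => rfl
  | @cons l₁ l₂ c _ ih =>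
    simp only [List.cons_append, pathSum]
    linarith [pathSum_le_add_pathSum htri a c b l₁, ih c]
  | cons_cons c _ ih =>
    simp only [List.cons_append, pathSum]
    linarith [ih c]

theorem cyclicSum_le_of_sublist {l₁ l₂ : List α} (h : l₁.Sublist l₂) :
    cyclicSum d l₁ ≤ cyclicSum d l₂ := by
  have cons_le : ∀ a t, (a :: t).Sublist l₂ → cyclicSum d (a :: t) ≤ cyclicSum d l₂ := by
    intro a t hsub
    obtain ⟨r₁, r₂, rfl, ha, ht⟩ := List.cons_sublist_iff.1 hsub
    obtain ⟨s, u, rfl⟩ := List.append_of_mem ha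
    rw [List.append_assoc, ← cyclicSum_rotate d (s ++ _) s.length, List.rotate_append_length_eq,
      List.cons_append, List.cons_append, cyclicSum_cons, cyclicSum_cons]
    exact pathSum_le_of_sublist htri
      ((ht.trans (List.sublist_append_right u r₂)).trans (List.sublist_append_left _ s)) a a
  rcases l₁ with _ | ⟨a, t⟩
  · rcases l₂ with _ | ⟨a, t⟩
    · rfl
    · calc cyclicSum d [] = 0 := rfl
        _ ≤ d a a := by linarith [htri a a a]
        _ = cyclicSum d [a] := by simp [cyclicSum]
        _ ≤ cyclicSum d (a :: t) := cons_le a [] (List.singleton_sublist.2 List.mem_cons_self)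
  · exact cons_le a t h

end CyclicSum

open Real
open scoped NNReal

namespace InnerProductGeometry

variable {V : Type*} [NormedAddCommGroup V] [InnerProductSpace ℝ V]

theorem zero_mem_convexHull_of_forall_exists_inner_nonneg [CompleteSpace V] {s : Set V}
    (hfin : s.Finite) (hs : s.Nonempty) (h : ∀ w : V, w ≠ 0 → ∃ p ∈ s, 0 ≤ inner ℝ w p) :
    (0 : V) ∈ convexHull ℝ s := by
  by_contra h0
  obtain ⟨f, u, hf0, hfs⟩ := geometric_hahn_banach_point_closed (convex_convexHull ℝ s)
    (hfin.isClosed_convexHull (𝕜 := ℝ)) h0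
  rw [map_zero] at hf0
  set w : V := -(InnerProductSpace.toDual ℝ V).symm f
  have hw : ∀ p, inner ℝ w p = -f p := fun p => by simp [w, inner_neg_left]
  obtain ⟨q, hq⟩ := hs
  have hw0 : w ≠ 0 := by
    intro hw0
    have := hfs q (subset_convexHull ℝ s hq)
    linarith [hw q, show inner ℝ w q = 0 by simp [hw0]]
  obtain ⟨p, hp, hwp⟩ := h w hw0
  linarith [hfs p (subset_convexHull ℝ s hp), hw p]

theorem angle_add_angle_add_angle_eq_two_pi_of_neg_mem_span {a b c : V} (ha : a ≠ 0)
    (h : -a ∈ Submodule.span ℝ≥0 {b, c}) : angle a b + angle b c + angle c a = 2 * π := by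
  have hsplit := angle_eq_angle_add_add_angle_add_of_mem_span (neg_ne_zero.2 ha) h
  rw [angle_neg_right, angle_neg_left] at hsplit
  linarith [angle_comm a b, angle_comm c a]

theorem neg_mem_span_of_smul_add_smul_add_smul_eq_zero {a b c : V} {p q r : ℝ} (hp : 0 < p)
    (hq : 0 ≤ q) (hr : 0 ≤ r) (h : p • a + q • b + r • c = 0) :
    -a ∈ Submodule.span ℝ≥0 {b, c} := by
  refine Submodule.mem_span_pair.2 ⟨(q / p).toNNReal, (r / p).toNNReal, ?_⟩
  rw [NNReal.smul_def, NNReal.smul_def, Real.coe_toNNReal _ (by positivity),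
    Real.coe_toNNReal _ (by positivity)]
  apply smul_right_injective V hp.ne'
  simp only [smul_add, smul_smul, mul_div_cancel₀ _ hp.ne', smul_neg]
  linear_combination (norm := module) h

theorem angle_add_angle_add_angle_eq_two_pi_of_zero_mem_convexHull {a b c : V} (ha : a ≠ 0)
    (hb : b ≠ 0) (hc : c ≠ 0) (h : (0 : V) ∈ convexHull ℝ {a, b, c}) :
    angle a b + angle b c + angle c a = 2 * π := by
  rw [convexHull_insert (Set.insert_nonempty b {c}), convexHull_pair, convexJoin_singleton_left,
    Set.mem_iUnion₂] at h
  obtain ⟨_, ⟨s, t, hs, ht, hst, rfl⟩, p, q, hp, hq, hpq, h0⟩ := h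
  rcases hp.lt_or_eq with hp | rfl
  · refine angle_add_angle_add_angle_eq_two_pi_of_neg_mem_span ha
      (neg_mem_span_of_smul_add_smul_add_smul_eq_zero hp (mul_nonneg hq hs) (mul_nonneg hq ht) ?_)
    rw [← h0]; module
  rw [zero_add] at hpq
  subst hpq
  rcases hs.lt_or_eq with hs | rfl
  · have := angle_add_angle_add_angle_eq_two_pi_of_neg_mem_span hb
      (neg_mem_span_of_smul_add_smul_add_smul_eq_zero hs ht le_rfl (b := c) (c := a) ?_)
    · linarith
    · rw [← h0]; module
  · rw [zero_add] at hst
    subst hst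
    simp [hc] at h0

end InnerProductGeometry

namespace EuclideanGeometry

variable {V P : Type*} [NormedAddCommGroup V] [InnerProductSpace ℝ V] [CompleteSpace V]
  [MetricSpace P] [NormedAddTorsor V P]

theorem angle_add_angle_add_angle_eq_two_pi_of_forall_exists_inner_nonneg {v x y z : P}
    (hx : x ≠ v) (hy : y ≠ v) (hz : z ≠ v)
    (h : ∀ w : V, w ≠ 0 → ∃ p ∈ ({x, y, z} : Set P), 0 ≤ inner ℝ w (p -ᵥ v)) :
    ∠ x v y + ∠ y v z + ∠ z v x = 2 * π := by
  have hull : (0 : V) ∈ convexHull ℝ {x -ᵥ v, y -ᵥ v, z -ᵥ v} :=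
    InnerProductGeometry.zero_mem_convexHull_of_forall_exists_inner_nonneg (Set.toFinite _)
      (Set.insert_nonempty _ _) fun w hw => by simpa using h w hw
  exact InnerProductGeometry.angle_add_angle_add_angle_eq_two_pi_of_zero_mem_convexHull
    (vsub_ne_zero.2 hx) (vsub_ne_zero.2 hy) (vsub_ne_zero.2 hz) hull

end EuclideanGeometry

/-- If among the neighbors of `v` (listed in cyclic order in `l`) there are three
points `x, y, z` such that every closed half-plane whose boundary passes through `v`
contains at least one of them, then the sum of consecutive angles at `v` around the
cyclic order is at least `2π`. -/
theorem angle_sum_ge_two_pi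
    (v : E2) (l : List E2)
    (hne : ∀ p ∈ l, p ≠ v)
    (x y z : E2) (hx : x ∈ l) (hy : y ∈ l) (hz : z ∈ l)
    (hxyz : [x, y, z].Pairwise (· ≠ ·))
    (hhalf : ∀ w : E2, w ≠ 0 →
      ∃ p ∈ ({x, y, z} : Set E2), 0 ≤ (inner ℝ w (p - v) : ℝ)) :
    2 * Real.pi ≤ angleSum v l := by
  obtain ⟨t, hperm, hsub⟩ := List.subperm_of_subset hxyz (by simp [hx, hy, hz] : [x, y, z] ⊆ l)
  obtain ⟨p, q, r, rfl⟩ := List.length_eq_three.1 hperm.length_eq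
  have hpqr : ({p, q, r} : Set E2) = {x, y, z} := by
    ext u
    simpa using hperm.mem_iff
  have hne' : ∀ u ∈ [p, q, r], u ≠ v := fun u hu => hne u (hsub.subset hu)
  calc 2 * π = ∠ p v q + ∠ q v r + ∠ r v p :=
        (angle_add_angle_add_angle_eq_two_pi_of_forall_exists_inner_nonneg (hne' p (by simp))
          (hne' q (by simp)) (hne' r (by simp)) (by simpa [hpqr] using hhalf)).symm
    _ = angleSum v [p, q, r] := by simp [angleSum, add_assoc]
    _ ≤ angleSum v l :=
      cyclicSum_le_of_sublist (fun a b c => angle_le_angle_add_angle v a b c) hsub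
end
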